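/- Let a, c > 0, 0 < α, and s > 0. Define g(T) = −γ(1 + aγηT^{−α/2})^{2T−2}(k_0 − 1 + T)^{−α} + s for constants γ, η, k_0 > 0. Then g(T) → −∞ as T → ∞; in particular there exists T₀ such that g(T) < 0 for all T ≥ T₀. -/
import Mathlib


open Filter

/-- The escape-condition function
`g(T) = −γ(1 + aγηT^{−α/2})^{2T−2}(k₀ − 1 + T)^{−α} + s` tends to `−∞`, and
in particular is eventually negative. -/
theorem escape_condition_eventually_negative (γ η a s α : ℝ) (k0 : ℕ)
    (hγ : 0 < γ) (hη : 0 < η) (ha : 0 < a) (hs : 0 < s)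
    (hα0 : 0 < α) (hα2 : α < 2) (hk0 : 0 < k0)
    (g : ℕ → ℝ)
    (hg : ∀ T : ℕ, g T
      = -γ * (1 + a * γ * η * (T : ℝ) ^ (-(α / 2))) ^ (2 * T - 2)
          * ((k0 - 1 + T : ℕ) : ℝ) ^ (-α) + s) :
    Tendsto g atTop atBot ∧ ∃ T0 : ℕ, ∀ T ≥ T0, g T < 0 := by
  set c : ℝ := a * γ * η with hc
  have hcpos : 0 < c := by positivity
  set k : ℕ := ⌈2 * α / (2 - α)⌉₊ + 1 with hkdef
  have hkpos : 0 < k := Nat.succ_pos _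
  have h2α : 0 < 2 - α := by linarith
  set β : ℝ := (1 - α / 2) * (k : ℝ) - α with hβdef
  have hβ : 0 < β := by
    have h1 : 2 * α / (2 - α) < (k : ℝ) := by
      calc 2 * α / (2 - α) ≤ (⌈2 * α / (2 - α)⌉₊ : ℝ) := Nat.le_ceil _
        _ < (k : ℝ) := by exact_mod_cast Nat.lt_succ_self _
    have h2 : 2 * α < (k : ℝ) * (2 - α) := (div_lt_iff₀ h2α).mp h1
    rw [hβdef]; nlinarith
  have hk0R : (0 : ℝ) < (k0 : ℝ) := by exact_mod_cast hk0
  set D : ℝ := γ * (c / k) ^ k * (k0 : ℝ) ^ (-α) with hDdef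
  have hDpos : 0 < D := by
    have h1 : (0 : ℝ) < (c / k) ^ k := by positivity
    have h2 : (0 : ℝ) < (k0 : ℝ) ^ (-α) := Real.rpow_pos_of_pos hk0R _
    positivity
  -- key eventual bound
  have key : ∀ᶠ T : ℕ in atTop, g T ≤ -(D * (T : ℝ) ^ β) + s := by
    filter_upwards [eventually_ge_atTop (k + 1)] with T hT
    have hT1 : 1 ≤ T := by omega
    have htpos : (0 : ℝ) < (T : ℝ) := by exact_mod_cast (by omega : 0 < T)
    set t : ℝ := (T : ℝ) with htdef
    set x : ℝ := c * t ^ (-(α / 2)) with hxdef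
    have hx : 0 < x := by
      have := Real.rpow_pos_of_pos htpos (-(α / 2))
      positivity
    set m : ℕ := (2 * T - 2) / k with hmdef
    have h1 : k * m + (2 * T - 2) % k = 2 * T - 2 := by
      rw [hmdef]; exact Nat.div_add_mod _ _
    have hkm : T ≤ k * m := by
      have h2 := Nat.mod_lt (2 * T - 2) hkpos
      omega
    have hmk : m * k ≤ 2 * T - 2 := by
      rw [hmdef]; exact Nat.div_mul_le_self _ _
    have hm1 : t / k ≤ (m : ℝ) := by
      have hle : t ≤ (k : ℝ) * (m : ℝ) := by
        rw [htdef]; exact_mod_cast hkm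
      rw [div_le_iff₀ (by exact_mod_cast hkpos : (0:ℝ) < (k:ℝ))]
      linarith
    -- chain: (t/k * x)^k ≤ (1+x)^(2T-2)
    have c1 : ((m : ℝ) * x) ^ k ≤ (1 + x) ^ (2 * T - 2) := by
      have e1 : (m : ℝ) * x ≤ (1 + x) ^ m := by
        have := one_add_mul_le_pow (by linarith : (-2 : ℝ) ≤ x) m
        linarith
      have e2 : ((m : ℝ) * x) ^ k ≤ ((1 + x) ^ m) ^ k :=
        pow_le_pow_left₀ (by positivity) e1 k
      have e3 : ((1 + x) ^ m) ^ k = (1 + x) ^ (m * k) := (pow_mul _ _ _).symm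
      have e4 : (1 + x) ^ (m * k) ≤ (1 + x) ^ (2 * T - 2) :=
        pow_le_pow_right₀ (by linarith) hmk
      calc ((m : ℝ) * x) ^ k ≤ ((1 + x) ^ m) ^ k := e2
        _ = (1 + x) ^ (m * k) := e3
        _ ≤ (1 + x) ^ (2 * T - 2) := e4
    have c2 : (t / k * x) ^ k ≤ ((m : ℝ) * x) ^ k :=
      pow_le_pow_left₀ (by positivity) (mul_le_mul_of_nonneg_right hm1 hx.le) k
    -- compute (t/k * x)^k
    have htt : t * t ^ (-(α / 2)) = t ^ (1 - α / 2) := by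
      rw [show (1 - α / 2) = 1 + -(α / 2) by ring, Real.rpow_add htpos, Real.rpow_one]
    have c3 : (t / k * x) ^ k = (c / k) ^ k * t ^ ((1 - α / 2) * (k : ℝ)) := by
      have e1 : t / k * x = (c / k) * t ^ (1 - α / 2) := by
        rw [hxdef, ← htt]; ring
      rw [e1, mul_pow, ← Real.rpow_natCast (t ^ (1 - α / 2)) k,
        ← Real.rpow_mul htpos.le]
    -- B side
    have hnat : k0 - 1 + T ≤ k0 * T := by
      obtain ⟨n, rfl⟩ := Nat.exists_eq_succ_of_ne_zero hk0.ne'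
      have h1 : n ≤ n * T := Nat.le_mul_of_pos_right n (by omega)
      have h2 : (n + 1) * T = n * T + T := by ring
      show n + 1 - 1 + T ≤ (n + 1) * T
      omega
    have hbasepos : (0 : ℝ) < ((k0 - 1 + T : ℕ) : ℝ) := by
      exact_mod_cast (by omega : 0 < k0 - 1 + T)
    have c4 : (k0 : ℝ) ^ (-α) * t ^ (-α) ≤ ((k0 - 1 + T : ℕ) : ℝ) ^ (-α) := by
      have h1 : ((k0 - 1 + T : ℕ) : ℝ) ≤ (k0 : ℝ) * t := by
        calc ((k0 - 1 + T : ℕ) : ℝ) ≤ ((k0 * T : ℕ) : ℝ) := by exact_mod_cast hnat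
          _ = (k0 : ℝ) * t := by push_cast; ring
      have h2 : ((k0 : ℝ) * t) ^ (-α) ≤ ((k0 - 1 + T : ℕ) : ℝ) ^ (-α) :=
        Real.rpow_le_rpow_of_nonpos hbasepos h1 (by linarith)
      calc (k0 : ℝ) ^ (-α) * t ^ (-α) = ((k0 : ℝ) * t) ^ (-α) :=
            (Real.mul_rpow hk0R.le htpos.le).symm
        _ ≤ _ := h2
    -- combine
    have hP : (0 : ℝ) ≤ (c / k) ^ k * t ^ ((1 - α / 2) * (k : ℝ)) := by positivity
    have hQ : (0 : ℝ) ≤ (k0 : ℝ) ^ (-α) * t ^ (-α) := by positivity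
    have hA : (c / k) ^ k * t ^ ((1 - α / 2) * (k : ℝ)) ≤ (1 + x) ^ (2 * T - 2) := by
      rw [← c3]; exact le_trans c2 c1
    have hAnonneg : (0 : ℝ) ≤ (1 + x) ^ (2 * T - 2) := by positivity
    have hprod : ((c / k) ^ k * t ^ ((1 - α / 2) * (k : ℝ))) *
        ((k0 : ℝ) ^ (-α) * t ^ (-α))
        ≤ (1 + x) ^ (2 * T - 2) * ((k0 - 1 + T : ℕ) : ℝ) ^ (-α) :=
      mul_le_mul hA c4 hQ hAnonneg
    have hDT : D * t ^ β ≤ γ * (1 + x) ^ (2 * T - 2) * ((k0 - 1 + T : ℕ) : ℝ) ^ (-α) := by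
      have e : D * t ^ β = γ * (((c / k) ^ k * t ^ ((1 - α / 2) * (k : ℝ))) *
          ((k0 : ℝ) ^ (-α) * t ^ (-α))) := by
        rw [hDdef, hβdef, show (1 - α / 2) * (k : ℝ) - α = (1 - α / 2) * (k : ℝ) + -α
          by ring, Real.rpow_add htpos]
        ring
      calc D * t ^ β = γ * (((c / k) ^ k * t ^ ((1 - α / 2) * (k : ℝ))) *
              ((k0 : ℝ) ^ (-α) * t ^ (-α))) := e
        _ ≤ γ * ((1 + x) ^ (2 * T - 2) * ((k0 - 1 + T : ℕ) : ℝ) ^ (-α)) :=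
            mul_le_mul_of_nonneg_left hprod hγ.le
        _ = γ * (1 + x) ^ (2 * T - 2) * ((k0 - 1 + T : ℕ) : ℝ) ^ (-α) :=
            (mul_assoc _ _ _).symm
    rw [hg T]
    have : -γ * (1 + c * t ^ (-(α / 2))) ^ (2 * T - 2)
        * ((k0 - 1 + T : ℕ) : ℝ) ^ (-α) ≤ -(D * t ^ β) := by
      have := hDT
      rw [hxdef] at this
      linarith
    linarith
  -- tendsto
  have hlim : Tendsto (fun T : ℕ => -(D * (T : ℝ) ^ β) + s) atTop atBot := by
    have h1 : Tendsto (fun u : ℝ => u ^ β) atTop atTop := tendsto_rpow_atTop hβ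
    have h2 : Tendsto (fun T : ℕ => (T : ℝ) ^ β) atTop atTop :=
      h1.comp tendsto_natCast_atTop_atTop
    have h3 : Tendsto (fun T : ℕ => D * (T : ℝ) ^ β) atTop atTop :=
      h2.const_mul_atTop hDpos
    have h4 : Tendsto (fun T : ℕ => -(D * (T : ℝ) ^ β)) atTop atBot :=
      tendsto_neg_atTop_atBot.comp h3
    exact tendsto_atBot_add_const_right atTop s h4
  have main : Tendsto g atTop atBot := tendsto_atBot_mono' atTop key hlim
  refine ⟨main, ?_⟩
  have hev : ∀ᶠ T : ℕ in atTop, g T < 0 := main.eventually (eventually_lt_atBot 0)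
  obtain ⟨T0, hT0⟩ := eventually_atTop.mp hev
  exact ⟨T0, hT0⟩
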